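/- Let p be prime, let L be a linear factor of complexity ℓ in 𝔽_p^n, and let d = (a₁,a₂) ∈ 𝔽_p^ℓ × 𝔽_p^ℓ. Then ‖·‖_{U²(d)} is a semi-norm on the space of functions from 𝔽_p^n to ℂ (it is well-defined, nonnegative, homogeneous, and satisfies the triangle inequality), and it is a norm on the space of functions from 𝔽_p^n to ℂ supported on the atom L(a₁+a₂). -/

import Mathlib

open scoped BigOperators Matrix

namespace TW

noncomputable section

/-- Normalized average of a complex-valued function over a finite set. -/
def expC {α : Type*} (s : Finset α) (f : α → ℂ) : ℂ := (s.card : ℂ)⁻¹ * ∑ x ∈ s, f x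

/-- Normalized average of a real-valued function over a finite set. -/
def expR {α : Type*} (s : Finset α) (f : α → ℝ) : ℝ := (s.card : ℝ)⁻¹ * ∑ x ∈ s, f x

/-- `k`-fold complex conjugation. -/
def cConj (k : ℕ) (z : ℂ) : ℂ := if k % 2 = 0 then z else (starRingEnd ℂ) z

/-- Select one of two elements according to a bit: `bsel false u v = u`, `bsel true u v = v`. -/
def bsel {α : Type*} (b : Bool) (u v : α) : α := if b then v else u

/-- The number of ones in a boolean vector. -/
def wt {k : ℕ} (ω : Fin k → Bool) : ℕ := (Finset.univ.filter fun i => ω i = true).card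

/-- The indicator function of a finite set, with values in `ℂ`. -/
def indC {α : Type*} [DecidableEq α] (A : Finset α) (x : α) : ℂ := if x ∈ A then 1 else 0

/-- The density `|A ∩ B| / |B|` of `A` on `B`. -/
def density {α : Type*} [DecidableEq α] (A B : Finset α) : ℝ :=
  ((A ∩ B).card : ℝ) / (B.card : ℝ)

/-- A growth function: an increasing positive function on `ℝ⁺`. -/
def GrowthFunction (σ : ℝ → ℝ) : Prop :=
  (∀ x : ℝ, 0 < x → 0 < σ x) ∧ ∀ x y : ℝ, 0 < x → x ≤ y → σ x ≤ σ y

/-- A polynomial growth function: a growth function bounded above by a polynomial on `ℝ⁺`. -/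
def PolyGrowthFunction (σ : ℝ → ℝ) : Prop :=
  GrowthFunction σ ∧ ∃ P : Polynomial ℝ, ∀ x : ℝ, 0 < x → σ x ≤ P.eval x

/-- `A ⊆ G` has the `m`-independence property (i.e. `VC`-dimension at least `m`). -/
def HasIP {G : Type*} [AddCommGroup G] (A : Set G) (m : ℕ) : Prop :=
  ∃ (a : Fin m → G) (b : Finset (Fin m) → G),
    ∀ (i : Fin m) (S : Finset (Fin m)), a i + b S ∈ A ↔ i ∈ S

/-- `A ⊆ G` has the `m`-`IP₂` property (i.e. `VC₂`-dimension at least `m`). -/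
def HasIP2 {G : Type*} [AddCommGroup G] (A : Set G) (m : ℕ) : Prop :=
  ∃ (a b : Fin m → G) (c : Finset (Fin m × Fin m) → G),
    ∀ (i j : Fin m) (S : Finset (Fin m × Fin m)), a i + b j + c S ∈ A ↔ (i, j) ∈ S

variable {p : ℕ}

/-- The atom of the linear factor `L` labelled by `a`. -/
def linAtom [NeZero p] {n ℓ : ℕ} (L : Fin ℓ → (Fin n → ZMod p)) (a : Fin ℓ → ZMod p) :
    Finset (Fin n → ZMod p) :=
  Finset.univ.filter fun x => ∀ i, x ⬝ᵥ L i = a i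

/-- A quadratic factor on `𝔽_p^n` of complexity `(ℓ, q)`: `ℓ` linearly independent vectors
together with `q` symmetric `n × n` matrices over `𝔽_p`. -/
structure QuadFactor (p n ℓ q : ℕ) where
  L : Fin ℓ → (Fin n → ZMod p)
  M : Fin q → Matrix (Fin n) (Fin n) (ZMod p)
  indep : LinearIndependent (ZMod p) L
  symm : ∀ j, (M j).IsSymm

/-- The atom of a quadratic factor labelled by `a = (linear label, quadratic label)`. -/
def qAtom [NeZero p] {n ℓ q : ℕ} (F : QuadFactor p n ℓ q)
    (a : (Fin ℓ → ZMod p) × (Fin q → ZMod p)) : Finset (Fin n → ZMod p) :=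
  Finset.univ.filter fun x =>
    (∀ i, x ⬝ᵥ F.L i = a.1 i) ∧ ∀ j, x ⬝ᵥ (F.M j *ᵥ x) = a.2 j

/-- The set of (nonempty) atoms of a quadratic factor. -/
def atoms [NeZero p] {n ℓ q : ℕ} (F : QuadFactor p n ℓ q) :
    Finset (Finset (Fin n → ZMod p)) :=
  ((Finset.univ : Finset ((Fin ℓ → ZMod p) × (Fin q → ZMod p))).image fun a => qAtom F a).filter
    fun B => B.Nonempty

/-- The quadratic factor `F` has rank at least `r`: every nontrivial linear combination of its
matrices has rank at least `r`. -/
def rankGe {n ℓ q : ℕ} (F : QuadFactor p n ℓ q) (r : ℝ) : Prop :=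
  ∀ lam : Fin q → ZMod p, lam ≠ 0 → r ≤ ((∑ j, lam j • F.M j).rank : ℝ)

/-- The bilinear level set `β(b)`. -/
def bilinSet [NeZero p] {n q : ℕ} (M : Fin q → Matrix (Fin n) (Fin n) (ZMod p))
    (b : Fin q → ZMod p) : Finset ((Fin n → ZMod p) × (Fin n → ZMod p)) :=
  Finset.univ.filter fun xy => ∀ j, xy.1 ⬝ᵥ (M j *ᵥ xy.2) = b j

/-- The characteristic measure `μ_{β(b)}` of a bilinear level set. -/
def bmu [NeZero p] {n q : ℕ} (M : Fin q → Matrix (Fin n) (Fin n) (ZMod p))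
    (b : Fin q → ZMod p) (x y : Fin n → ZMod p) : ℝ :=
  if (x, y) ∈ bilinSet M b then ((p : ℝ) ^ (2 * n)) / ((bilinSet M b).card : ℝ) else 0

/-- The label `Σ(d)` of the atom on which the local `U³` inner product evaluates its inputs. -/
def sigmaLabel {p : ℕ} {ℓ q : ℕ} (a₁ a₂ a₃ : (Fin ℓ → ZMod p) × (Fin q → ZMod p))
    (b₁₂ b₁₃ b₂₃ : Fin q → ZMod p) : (Fin ℓ → ZMod p) × (Fin q → ZMod p) :=
  (a₁.1 + a₂.1 + a₃.1, a₁.2 + a₂.2 + a₃.2 + 2 • (b₁₂ + b₁₃ + b₂₃))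

/-- The local `U²` inner product relative to the atoms `L(a₁)`, `L(a₂)`. -/
def localU2Inner [NeZero p] {n ℓ : ℕ} (L : Fin ℓ → (Fin n → ZMod p)) (a₁ a₂ : Fin ℓ → ZMod p)
    (f : (Fin 2 → Bool) → (Fin n → ZMod p) → ℂ) : ℂ :=
  expC (linAtom L a₁) fun x₀ => expC (linAtom L a₁) fun x₁ =>
  expC (linAtom L a₂) fun y₀ => expC (linAtom L a₂) fun y₁ =>
  ∏ ε : Fin 2 → Bool, cConj (wt ε) (f ε (bsel (ε 0) x₀ x₁ + bsel (ε 1) y₀ y₁))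

/-- The local `U²` semi-norm. -/
def localU2Norm [NeZero p] {n ℓ : ℕ} (L : Fin ℓ → (Fin n → ZMod p)) (a₁ a₂ : Fin ℓ → ZMod p)
    (f : (Fin n → ZMod p) → ℂ) : ℝ :=
  (localU2Inner L a₁ a₂ fun _ => f).re ^ ((1 : ℝ) / 4)

/-- The (global) `U²` inner product on `𝔽_p^n`. -/
def U2Inner [NeZero p] {n : ℕ} (f : (Fin 2 → Bool) → (Fin n → ZMod p) → ℂ) : ℂ :=
  expC (Finset.univ : Finset (Fin n → ZMod p)) fun x₀ =>
  expC (Finset.univ : Finset (Fin n → ZMod p)) fun x₁ =>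
  expC (Finset.univ : Finset (Fin n → ZMod p)) fun y₀ =>
  expC (Finset.univ : Finset (Fin n → ZMod p)) fun y₁ =>
  ∏ ε : Fin 2 → Bool, cConj (wt ε) (f ε (bsel (ε 0) x₀ x₁ + bsel (ε 1) y₀ y₁))

/-- The Gowers `U²` norm on `𝔽_p^n`. -/
def U2Norm [NeZero p] {n : ℕ} (f : (Fin n → ZMod p) → ℂ) : ℝ :=
  (U2Inner fun _ => f).re ^ ((1 : ℝ) / 4)

/-- The (global) `U³` inner product on `𝔽_p^n`. -/
def U3Inner [NeZero p] {n : ℕ} (f : (Fin 3 → Bool) → (Fin n → ZMod p) → ℂ) : ℂ :=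
  expC (Finset.univ : Finset (Fin n → ZMod p)) fun x₀ =>
  expC (Finset.univ : Finset (Fin n → ZMod p)) fun x₁ =>
  expC (Finset.univ : Finset (Fin n → ZMod p)) fun y₀ =>
  expC (Finset.univ : Finset (Fin n → ZMod p)) fun y₁ =>
  expC (Finset.univ : Finset (Fin n → ZMod p)) fun z₀ =>
  expC (Finset.univ : Finset (Fin n → ZMod p)) fun z₁ =>
  ∏ ω : Fin 3 → Bool,
    cConj (wt ω) (f ω (bsel (ω 0) x₀ x₁ + bsel (ω 1) y₀ y₁ + bsel (ω 2) z₀ z₁))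

/-- The Gowers `U³` norm on `𝔽_p^n`. -/
def U3Norm [NeZero p] {n : ℕ} (f : (Fin n → ZMod p) → ℂ) : ℝ :=
  (U3Inner fun _ => f).re ^ ((1 : ℝ) / 8)

/-- The local `U³` inner product relative to a quadratic factor, with label tuple
`d = (a₁, a₂, a₃, b₁₂, b₁₃, b₂₃)`. -/
def localU3Inner [NeZero p] {n ℓ q : ℕ} (F : QuadFactor p n ℓ q)
    (a₁ a₂ a₃ : (Fin ℓ → ZMod p) × (Fin q → ZMod p)) (b₁₂ b₁₃ b₂₃ : Fin q → ZMod p)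
    (f : (Fin 3 → Bool) → (Fin n → ZMod p) → ℂ) : ℂ :=
  expC (qAtom F a₁) fun x₀ => expC (qAtom F a₁) fun x₁ =>
  expC (qAtom F a₂) fun y₀ => expC (qAtom F a₂) fun y₁ =>
  expC (qAtom F a₃) fun z₀ => expC (qAtom F a₃) fun z₁ =>
  (∏ ij : Bool × Bool, (bmu F.M b₁₂ (bsel ij.1 x₀ x₁) (bsel ij.2 y₀ y₁) : ℂ)) *
  (∏ ik : Bool × Bool, (bmu F.M b₁₃ (bsel ik.1 x₀ x₁) (bsel ik.2 z₀ z₁) : ℂ)) *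
  (∏ jk : Bool × Bool, (bmu F.M b₂₃ (bsel jk.1 y₀ y₁) (bsel jk.2 z₀ z₁) : ℂ)) *
  ∏ ω : Fin 3 → Bool,
    cConj (wt ω) (f ω (bsel (ω 0) x₀ x₁ + bsel (ω 1) y₀ y₁ + bsel (ω 2) z₀ z₁))

/-- The local `U³` semi-norm. -/
def localU3Norm [NeZero p] {n ℓ q : ℕ} (F : QuadFactor p n ℓ q)
    (a₁ a₂ a₃ : (Fin ℓ → ZMod p) × (Fin q → ZMod p)) (b₁₂ b₁₃ b₂₃ : Fin q → ZMod p)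
    (f : (Fin n → ZMod p) → ℂ) : ℝ :=
  (localU3Inner F a₁ a₂ a₃ b₁₂ b₁₃ b₂₃ fun _ => f).re ^ ((1 : ℝ) / 8)

/-- The `m`-`IP` operator. -/
def IPop [NeZero p] {n : ℕ} (m : ℕ) (f : Fin m → Finset (Fin m) → (Fin n → ZMod p) → ℂ) : ℂ :=
  expC (Finset.univ : Finset (Fin m → Fin n → ZMod p)) fun x =>
  expC (Finset.univ : Finset (Finset (Fin m) → Fin n → ZMod p)) fun y =>
  ∏ i, ∏ S, f i S (x i + y S)

/-- The `m`-`IP₂` operator. -/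
def IP2op [NeZero p] {n : ℕ} (m : ℕ)
    (f : Fin m → Fin m → Finset (Fin m × Fin m) → (Fin n → ZMod p) → ℂ) : ℂ :=
  expC (Finset.univ : Finset (Fin m → Fin n → ZMod p)) fun x =>
  expC (Finset.univ : Finset (Fin m → Fin n → ZMod p)) fun y =>
  expC (Finset.univ : Finset (Finset (Fin m × Fin m) → Fin n → ZMod p)) fun z =>
  ∏ i, ∏ j, ∏ S, f i j S (x i + y j + z S)

/-- The local `m`-`IP` operator relative to the atoms `L(a₁)`, `L(a₂)`. -/
def localIPop [NeZero p] {n ℓ : ℕ} (m : ℕ) (L : Fin ℓ → (Fin n → ZMod p))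
    (a₁ a₂ : Fin ℓ → ZMod p) (f : Fin m → Finset (Fin m) → (Fin n → ZMod p) → ℂ) : ℂ :=
  expC (Fintype.piFinset fun _ : Fin m => linAtom L a₁) fun x =>
  expC (Fintype.piFinset fun _ : Finset (Fin m) => linAtom L a₂) fun y =>
  ∏ i, ∏ S, f i S (x i + y S)

/-- The local `m`-`IP₂` operator relative to a quadratic factor with label tuple `d`. -/
def localIP2op [NeZero p] {n ℓ q : ℕ} (m : ℕ) (F : QuadFactor p n ℓ q)
    (a₁ a₂ a₃ : (Fin ℓ → ZMod p) × (Fin q → ZMod p)) (b₁₂ b₁₃ b₂₃ : Fin q → ZMod p)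
    (f : Fin m → Fin m → Finset (Fin m × Fin m) → (Fin n → ZMod p) → ℂ) : ℂ :=
  expC (Fintype.piFinset fun _ : Fin m => qAtom F a₁) fun x =>
  expC (Fintype.piFinset fun _ : Fin m => qAtom F a₂) fun y =>
  expC (Fintype.piFinset fun _ : Finset (Fin m × Fin m) => qAtom F a₃) fun z =>
    (∏ i, ∏ j, (bmu F.M b₁₂ (x i) (y j) : ℂ)) *
    (∏ i, ∏ S, (bmu F.M b₁₃ (x i) (z S) : ℂ)) *
    (∏ j, ∏ S, (bmu F.M b₂₃ (y j) (z S) : ℂ)) *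
    ∏ i, ∏ j, ∏ S, f i j S (x i + y j + z S)

/-- The ternary multi-local `F`-operator, for a `3`-partite `3`-uniform hypergraph with parts
`U`, `V`, `W` and label tuples `e_{uvw} = (a u, b v, c w, d₁₂ u v, d₁₃ u w, d₂₃ v w)`. -/
def TFop [NeZero p] {n ℓ q m : ℕ} (F : QuadFactor p n ℓ q) (U V W : Finset (Fin m))
    (a b c : Fin m → (Fin ℓ → ZMod p) × (Fin q → ZMod p))
    (d₁₂ d₁₃ d₂₃ : Fin m → Fin m → (Fin q → ZMod p))
    (g : Fin m → Fin m → Fin m → (Fin n → ZMod p) → ℂ) : ℂ :=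
  expC (Fintype.piFinset fun u : {u // u ∈ U} => qAtom F (a u.1)) fun x =>
  expC (Fintype.piFinset fun v : {v // v ∈ V} => qAtom F (b v.1)) fun y =>
  expC (Fintype.piFinset fun w : {w // w ∈ W} => qAtom F (c w.1)) fun z =>
    (∏ u, ∏ v, (bmu F.M (d₁₂ u.1 v.1) (x u) (y v) : ℂ)) *
    (∏ u, ∏ w, (bmu F.M (d₁₃ u.1 w.1) (x u) (z w) : ℂ)) *
    (∏ v, ∏ w, (bmu F.M (d₂₃ v.1 w.1) (y v) (z w) : ℂ)) *
    ∏ u, ∏ v, ∏ w, g u.1 v.1 w.1 (x u + y v + z w)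

end
noncomputable section SemiNormAux

open Finset ComplexConjugate

/-! ### expC toolkit -/

lemma expC_const_mul {α : Type*} (s : Finset α) (c : ℂ) (f : α → ℂ) :
    expC s (fun x => c * f x) = c * expC s f := by
  simp only [expC, Finset.mul_sum]
  exact Finset.sum_congr rfl fun x _ => by ring

lemma expC_mul_const {α : Type*} (s : Finset α) (f : α → ℂ) (c : ℂ) :
    expC s (fun x => f x * c) = expC s f * c := by
  simp only [expC]
  rw [← Finset.sum_mul]; ring

lemma expC_conj {α : Type*} (s : Finset α) (f : α → ℂ) :
    expC s (fun x => conj (f x)) = conj (expC s f) := by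
  simp [expC, map_mul, map_sum, map_inv₀]

lemma expC_sum {α β : Type*} (s : Finset α) (t : Finset β) (f : β → α → ℂ) :
    expC s (fun x => ∑ b ∈ t, f b x) = ∑ b ∈ t, expC s (f b) := by
  simp only [expC, Finset.mul_sum]
  rw [Finset.sum_comm]

lemma expC_ofReal {α : Type*} (s : Finset α) (r : α → ℝ) :
    expC s (fun x => ((r x : ℝ) : ℂ)) = ((expR s r : ℝ) : ℂ) := by
  simp only [expC, expR]
  push_cast
  ring

lemma expR_nonneg {α : Type*} (s : Finset α) (r : α → ℝ) (h : ∀ x ∈ s, 0 ≤ r x) :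
    0 ≤ expR s r :=
  mul_nonneg (by positivity) (Finset.sum_nonneg h)

lemma expR_eq_zero {α : Type*} (s : Finset α) (r : α → ℝ) (h : ∀ x ∈ s, 0 ≤ r x)
    (hs : s.Nonempty) (hz : expR s r = 0) : ∀ x ∈ s, r x = 0 := by
  have hc : ((s.card : ℝ))⁻¹ ≠ 0 := by
    have := Finset.card_pos.2 hs
    positivity
  have hsum : ∑ x ∈ s, r x = 0 := by
    rcases mul_eq_zero.1 hz with h' | h'
    · exact absurd h' hc
    · exact h'
  exact fun x hx => (Finset.sum_eq_zero_iff_of_nonneg h).1 hsum x hx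

lemma expC_prod {α β : Type*} (s : Finset α) (t : Finset β) (h : α → β → ℂ) :
    (expC s fun a => expC t fun b => h a b) = expC (s ×ˢ t) (fun z => h z.1 z.2) := by
  simp only [expC, Finset.card_product, Nat.cast_mul, mul_inv, Finset.sum_product,
    Finset.mul_sum]
  refine Finset.sum_congr rfl fun a _ => ?_
  refine Finset.sum_congr rfl fun b _ => ?_
  ring

lemma expC_swap {α β : Type*} (s : Finset α) (t : Finset β) (h : α → β → ℂ) :
    expC (s ×ˢ t) (fun z => h z.1 z.2) = expC (t ×ˢ s) (fun z => h z.2 z.1) := by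
  simp only [expC, Finset.card_product, Nat.cast_mul, Finset.sum_product]
  rw [Finset.sum_comm]
  ring

lemma expC_mul_expC {α β : Type*} (s : Finset α) (t : Finset β) (f : α → ℂ) (g : β → ℂ) :
    expC s f * expC t g = expC (s ×ˢ t) (fun z => f z.1 * g z.2) := by
  have h1 : (expC s fun a => expC t fun b => f a * g b) = expC s (fun a => f a * expC t g) :=
    congrArg _ (funext fun a => expC_const_mul t (f a) g)
  have h2 : expC s (fun a => f a * expC t g) = expC s f * expC t g :=
    expC_mul_const s f (expC t g)
  calc expC s f * expC t g = expC s fun a => expC t fun b => f a * g b := by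
        rw [h1, h2]
    _ = expC (s ×ˢ t) (fun z => f z.1 * g z.2) := expC_prod s t fun a b => f a * g b


/-! ### The flat `U²` form -/

variable {G : Type*} [AddCommGroup G]

def gB (A : Finset G) (u v : G → ℂ) (x : G × G) : ℂ :=
  expC A fun y => u (x.1 + y) * conj (v (x.2 + y))

def hB (A : Finset G) (u v : G → ℂ) (y : G × G) : ℂ :=
  expC A fun x => u (x + y.1) * conj (v (x + y.2))

def flat (A₁ A₂ : Finset G) (u₁ v₁ u₂ v₂ : G → ℂ) : ℂ :=
  expC ((A₁ ×ˢ A₁) ×ˢ (A₂ ×ˢ A₂)) fun z =>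
    u₁ (z.1.1 + z.2.1) * conj (v₁ (z.1.2 + z.2.1)) *
      (conj (u₂ (z.1.1 + z.2.2)) * v₂ (z.1.2 + z.2.2))

lemma flat_eq_gB (A₁ A₂ : Finset G) (u₁ v₁ u₂ v₂ : G → ℂ) :
    flat A₁ A₂ u₁ v₁ u₂ v₂ =
      expC (A₁ ×ˢ A₁) fun x => gB A₂ u₁ v₁ x * conj (gB A₂ u₂ v₂ x) := by
  have hx : ∀ x : G × G, gB A₂ u₁ v₁ x * conj (gB A₂ u₂ v₂ x) =
      expC (A₂ ×ˢ A₂) fun y =>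
        u₁ (x.1 + y.1) * conj (v₁ (x.2 + y.1)) *
          (conj (u₂ (x.1 + y.2)) * v₂ (x.2 + y.2)) := by
    intro x
    have hconj : conj (gB A₂ u₂ v₂ x) =
        expC A₂ fun y => conj (u₂ (x.1 + y)) * v₂ (x.2 + y) := by
      rw [gB, ← expC_conj]
      exact congrArg _ (funext fun y => by simp [map_mul])
    rw [gB, hconj, expC_mul_expC]
  rw [show (fun x : G × G => gB A₂ u₁ v₁ x * conj (gB A₂ u₂ v₂ x)) =
      fun x : G × G => expC (A₂ ×ˢ A₂) fun y =>
        u₁ (x.1 + y.1) * conj (v₁ (x.2 + y.1)) *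
          (conj (u₂ (x.1 + y.2)) * v₂ (x.2 + y.2)) from funext hx]
  rw [flat]
  exact (expC_prod (A₁ ×ˢ A₁) (A₂ ×ˢ A₂) fun x y =>
    u₁ (x.1 + y.1) * conj (v₁ (x.2 + y.1)) * (conj (u₂ (x.1 + y.2)) * v₂ (x.2 + y.2))).symm

set_option maxHeartbeats 1000000 in
lemma flat_eq_hB (A₁ A₂ : Finset G) (u₁ v₁ u₂ v₂ : G → ℂ) :
    flat A₁ A₂ u₁ v₁ u₂ v₂ =
      expC (A₂ ×ˢ A₂) fun y => hB A₁ u₁ u₂ y * conj (hB A₁ v₁ v₂ y) := by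
  have hy : ∀ y : G × G, hB A₁ u₁ u₂ y * conj (hB A₁ v₁ v₂ y) =
      expC (A₁ ×ˢ A₁) fun x =>
        u₁ (x.1 + y.1) * conj (u₂ (x.1 + y.2)) *
          (conj (v₁ (x.2 + y.1)) * v₂ (x.2 + y.2)) := by
    intro y
    have hconj : conj (hB A₁ v₁ v₂ y) =
        expC A₁ fun x => conj (v₁ (x + y.1)) * v₂ (x + y.2) := by
      rw [hB, ← expC_conj]
      exact congrArg _ (funext fun x => by simp [map_mul])
    rw [hB, hconj, expC_mul_expC]
  rw [show (fun y : G × G => hB A₁ u₁ u₂ y * conj (hB A₁ v₁ v₂ y)) =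
      fun y : G × G => expC (A₁ ×ˢ A₁) fun x =>
        u₁ (x.1 + y.1) * conj (u₂ (x.1 + y.2)) *
          (conj (v₁ (x.2 + y.1)) * v₂ (x.2 + y.2)) from funext hy]
  calc flat A₁ A₂ u₁ v₁ u₂ v₂
      = expC ((A₁ ×ˢ A₁) ×ˢ (A₂ ×ˢ A₂)) (fun z =>
          (fun (x y : G × G) => u₁ (x.1 + y.1) * conj (v₁ (x.2 + y.1)) *
            (conj (u₂ (x.1 + y.2)) * v₂ (x.2 + y.2))) z.1 z.2) := rfl
    _ = expC ((A₂ ×ˢ A₂) ×ˢ (A₁ ×ˢ A₁)) (fun z =>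
          (fun (x y : G × G) => u₁ (x.1 + y.1) * conj (v₁ (x.2 + y.1)) *
            (conj (u₂ (x.1 + y.2)) * v₂ (x.2 + y.2))) z.2 z.1) :=
        expC_swap (A₁ ×ˢ A₁) (A₂ ×ˢ A₂) (fun (x y : G × G) =>
          u₁ (x.1 + y.1) * conj (v₁ (x.2 + y.1)) *
            (conj (u₂ (x.1 + y.2)) * v₂ (x.2 + y.2)))
    _ = expC (A₂ ×ˢ A₂) fun y => expC (A₁ ×ˢ A₁) fun x =>
          u₁ (x.1 + y.1) * conj (v₁ (x.2 + y.1)) *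
            (conj (u₂ (x.1 + y.2)) * v₂ (x.2 + y.2)) :=
        (expC_prod (A₂ ×ˢ A₂) (A₁ ×ˢ A₁) fun y x =>
          u₁ (x.1 + y.1) * conj (v₁ (x.2 + y.1)) *
            (conj (u₂ (x.1 + y.2)) * v₂ (x.2 + y.2))).symm
    _ = expC (A₂ ×ˢ A₂) fun y => expC (A₁ ×ˢ A₁) fun x =>
          u₁ (x.1 + y.1) * conj (u₂ (x.1 + y.2)) *
            (conj (v₁ (x.2 + y.1)) * v₂ (x.2 + y.2)) :=
        congrArg _ (funext fun y => congrArg _ (funext fun x => by ring))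


/-! ### cConj and wt computations -/

lemma cConj_add (k : ℕ) (a b : ℂ) : cConj k (a + b) = cConj k a + cConj k b := by
  unfold cConj; split <;> simp

lemma prod_fin2bool {R : Type*} [CommRing R] (h : (Fin 2 → Bool) → R) :
    ∏ ε : Fin 2 → Bool, h ε =
      h ![false, false] * h ![true, false] * (h ![false, true] * h ![true, true]) := by
  have huniv : (Finset.univ : Finset (Fin 2 → Bool)) =
      {![false, false], ![true, false], ![false, true], ![true, true]} := by decide
  rw [huniv]
  rw [Finset.prod_insert (by decide), Finset.prod_insert (by decide),
    Finset.prod_insert (by decide), Finset.prod_singleton]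
  ring

lemma u2integrand_eq (F : (Fin 2 → Bool) → G → ℂ) (x₀ x₁ y₀ y₁ : G) :
    (∏ ε : Fin 2 → Bool, cConj (wt ε) (F ε (bsel (ε 0) x₀ x₁ + bsel (ε 1) y₀ y₁))) =
      F ![false, false] (x₀ + y₀) * conj (F ![true, false] (x₁ + y₀)) *
        (conj (F ![false, true] (x₀ + y₁)) * F ![true, true] (x₁ + y₁)) := by
  rw [prod_fin2bool (fun ε => cConj (wt ε) (F ε (bsel (ε 0) x₀ x₁ + bsel (ε 1) y₀ y₁)))]
  have w00 : wt ![false, false] = 0 := by decide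
  have w10 : wt ![true, false] = 1 := by decide
  have w01 : wt ![false, true] = 1 := by decide
  have w11 : wt ![true, true] = 2 := by decide
  rw [w00, w10, w01, w11]
  simp [cConj, bsel]

lemma expC_four {α β γ δ : Type*} (s₁ : Finset α) (s₂ : Finset β) (s₃ : Finset γ)
    (s₄ : Finset δ) (h : α → β → γ → δ → ℂ) :
    (expC s₁ fun a => expC s₂ fun b => expC s₃ fun c => expC s₄ fun d => h a b c d) =
      expC ((s₁ ×ˢ s₂) ×ˢ (s₃ ×ˢ s₄)) fun z => h z.1.1 z.1.2 z.2.1 z.2.2 := by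
  calc (expC s₁ fun a => expC s₂ fun b => expC s₃ fun c => expC s₄ fun d => h a b c d)
      = expC s₁ fun a => expC s₂ fun b => expC (s₃ ×ˢ s₄) fun y => h a b y.1 y.2 :=
        congrArg _ (funext fun a => congrArg _ (funext fun b =>
          expC_prod s₃ s₄ (fun c d => h a b c d)))
    _ = expC (s₁ ×ˢ s₂) fun x => expC (s₃ ×ˢ s₄) fun y => h x.1 x.2 y.1 y.2 :=
        expC_prod s₁ s₂ (fun a b => expC (s₃ ×ˢ s₄) fun y => h a b y.1 y.2)
    _ = expC ((s₁ ×ˢ s₂) ×ˢ (s₃ ×ˢ s₄)) fun z => h z.1.1 z.1.2 z.2.1 z.2.2 :=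
        expC_prod (s₁ ×ˢ s₂) (s₃ ×ˢ s₄) (fun x y => h x.1 x.2 y.1 y.2)

lemma u2_eq_flat (A₁ A₂ : Finset G) (F : (Fin 2 → Bool) → G → ℂ) :
    (expC A₁ fun x₀ => expC A₁ fun x₁ => expC A₂ fun y₀ => expC A₂ fun y₁ =>
      ∏ ε : Fin 2 → Bool, cConj (wt ε) (F ε (bsel (ε 0) x₀ x₁ + bsel (ε 1) y₀ y₁))) =
      flat A₁ A₂ (F ![false, false]) (F ![true, false]) (F ![false, true]) (F ![true, true]) := by
  have h1 : (expC A₁ fun x₀ => expC A₁ fun x₁ => expC A₂ fun y₀ => expC A₂ fun y₁ =>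
      ∏ ε : Fin 2 → Bool, cConj (wt ε) (F ε (bsel (ε 0) x₀ x₁ + bsel (ε 1) y₀ y₁))) =
      expC A₁ fun x₀ => expC A₁ fun x₁ => expC A₂ fun y₀ => expC A₂ fun y₁ =>
        F ![false, false] (x₀ + y₀) * conj (F ![true, false] (x₁ + y₀)) *
          (conj (F ![false, true] (x₀ + y₁)) * F ![true, true] (x₁ + y₁)) :=
    congrArg _ (funext fun x₀ => congrArg _ (funext fun x₁ => congrArg _ (funext fun y₀ =>
      congrArg _ (funext fun y₁ => u2integrand_eq F x₀ x₁ y₀ y₁))))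
  rw [h1, flat]
  exact expC_four A₁ A₁ A₂ A₂ (fun x₀ x₁ y₀ y₁ =>
    F ![false, false] (x₀ + y₀) * conj (F ![true, false] (x₁ + y₀)) *
      (conj (F ![false, true] (x₀ + y₁)) * F ![true, true] (x₁ + y₁)))



/-! ### Cauchy–Schwarz for expC -/

lemma norm_expC_mul_conj_le {α : Type*} (s : Finset α) (P Q : α → ℂ) :
    ‖expC s (fun x => P x * conj (Q x))‖ ≤
      Real.sqrt (expR s fun x => ‖P x‖ ^ 2) * Real.sqrt (expR s fun x => ‖Q x‖ ^ 2) := by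
  have hc : (0 : ℝ) ≤ ((s.card : ℝ))⁻¹ := by positivity
  have h1 : ‖((s.card : ℂ))⁻¹‖ = ((s.card : ℝ))⁻¹ := by
    rw [norm_inv]; norm_num
  have h2 : ‖∑ x ∈ s, P x * conj (Q x)‖ ≤ ∑ x ∈ s, ‖P x‖ * ‖Q x‖ := by
    refine (norm_sum_le _ _).trans ?_
    refine Finset.sum_le_sum fun x _ => ?_
    rw [norm_mul, RCLike.norm_conj]
  have hnn : 0 ≤ ∑ x ∈ s, ‖P x‖ * ‖Q x‖ :=
    Finset.sum_nonneg fun x _ => mul_nonneg (norm_nonneg _) (norm_nonneg _)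
  have h3 : ∑ x ∈ s, ‖P x‖ * ‖Q x‖ ≤
      Real.sqrt (∑ x ∈ s, ‖P x‖ ^ 2) * Real.sqrt (∑ x ∈ s, ‖Q x‖ ^ 2) := by
    calc ∑ x ∈ s, ‖P x‖ * ‖Q x‖ = Real.sqrt ((∑ x ∈ s, ‖P x‖ * ‖Q x‖) ^ 2) :=
          (Real.sqrt_sq hnn).symm
      _ ≤ Real.sqrt ((∑ x ∈ s, ‖P x‖ ^ 2) * ∑ x ∈ s, ‖Q x‖ ^ 2) :=
          Real.sqrt_le_sqrt (Finset.sum_mul_sq_le_sq_mul_sq s _ _)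
      _ = Real.sqrt (∑ x ∈ s, ‖P x‖ ^ 2) * Real.sqrt (∑ x ∈ s, ‖Q x‖ ^ 2) :=
          Real.sqrt_mul (Finset.sum_nonneg fun x _ => sq_nonneg _) _
  have key : ((s.card : ℝ))⁻¹ * (Real.sqrt (∑ x ∈ s, ‖P x‖ ^ 2) *
      Real.sqrt (∑ x ∈ s, ‖Q x‖ ^ 2)) =
      Real.sqrt (expR s fun x => ‖P x‖ ^ 2) * Real.sqrt (expR s fun x => ‖Q x‖ ^ 2) := by
    simp only [expR]
    have hss : Real.sqrt (((s.card : ℝ))⁻¹) * Real.sqrt (((s.card : ℝ))⁻¹) = ((s.card : ℝ))⁻¹ :=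
      Real.mul_self_sqrt hc
    rw [Real.sqrt_mul hc, Real.sqrt_mul hc]
    conv_lhs => rw [← hss]
    ring
  rw [expC, norm_mul, h1]
  calc ((s.card : ℝ))⁻¹ * ‖∑ x ∈ s, P x * conj (Q x)‖
      ≤ ((s.card : ℝ))⁻¹ * (Real.sqrt (∑ x ∈ s, ‖P x‖ ^ 2) *
          Real.sqrt (∑ x ∈ s, ‖Q x‖ ^ 2)) :=
        mul_le_mul_of_nonneg_left (h2.trans h3) hc
    _ = _ := key

/-! ### The quantity `sA` and the Gowers–Cauchy–Schwarz inequality -/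

def sA (A₁ A₂ : Finset G) (w : G → ℂ) : ℝ := (flat A₁ A₂ w w w w).re

lemma flat_self_gB (A₁ A₂ : Finset G) (u v : G → ℂ) :
    flat A₁ A₂ u v u v = ((expR (A₁ ×ˢ A₁) fun x => ‖gB A₂ u v x‖ ^ 2 : ℝ) : ℂ) := by
  rw [flat_eq_gB, ← expC_ofReal]
  exact congrArg _ (funext fun x => by
    rw [Complex.mul_conj]
    norm_cast
    rw [Complex.normSq_eq_norm_sq])

lemma flat_self_hB (A₁ A₂ : Finset G) (w : G → ℂ) :
    flat A₁ A₂ w w w w = ((expR (A₂ ×ˢ A₂) fun y => ‖hB A₁ w w y‖ ^ 2 : ℝ) : ℂ) := by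
  rw [flat_eq_hB, ← expC_ofReal]
  exact congrArg _ (funext fun y => by
    rw [Complex.mul_conj]
    norm_cast
    rw [Complex.normSq_eq_norm_sq])

lemma sA_eq_gB (A₁ A₂ : Finset G) (w : G → ℂ) :
    sA A₁ A₂ w = expR (A₁ ×ˢ A₁) fun x => ‖gB A₂ w w x‖ ^ 2 := by
  rw [sA, flat_self_gB, Complex.ofReal_re]

lemma sA_eq_hB (A₁ A₂ : Finset G) (w : G → ℂ) :
    sA A₁ A₂ w = expR (A₂ ×ˢ A₂) fun y => ‖hB A₁ w w y‖ ^ 2 := by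
  rw [sA, flat_self_hB, Complex.ofReal_re]

lemma sA_nonneg (A₁ A₂ : Finset G) (w : G → ℂ) : 0 ≤ sA A₁ A₂ w := by
  rw [sA_eq_gB]
  exact expR_nonneg _ _ fun x _ => sq_nonneg _

lemma norm_flat_le (A₁ A₂ : Finset G) (u₁ v₁ u₂ v₂ : G → ℂ) :
    ‖flat A₁ A₂ u₁ v₁ u₂ v₂‖ ≤
      sA A₁ A₂ u₁ ^ ((1 : ℝ) / 4) * sA A₁ A₂ v₁ ^ ((1 : ℝ) / 4) *
        (sA A₁ A₂ u₂ ^ ((1 : ℝ) / 4) * sA A₁ A₂ v₂ ^ ((1 : ℝ) / 4)) := by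
  have h1 : ‖flat A₁ A₂ u₁ v₁ u₂ v₂‖ ≤
      Real.sqrt (expR (A₁ ×ˢ A₁) fun x => ‖gB A₂ u₁ v₁ x‖ ^ 2) *
        Real.sqrt (expR (A₁ ×ˢ A₁) fun x => ‖gB A₂ u₂ v₂ x‖ ^ 2) := by
    rw [flat_eq_gB]
    exact norm_expC_mul_conj_le _ _ _
  have h2 : ∀ u v : G → ℂ, (expR (A₁ ×ˢ A₁) fun x => ‖gB A₂ u v x‖ ^ 2) ≤
      Real.sqrt (sA A₁ A₂ u) * Real.sqrt (sA A₁ A₂ v) := by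
    intro u v
    have e1 : (expR (A₁ ×ˢ A₁) fun x => ‖gB A₂ u v x‖ ^ 2) = (flat A₁ A₂ u v u v).re := by
      rw [flat_self_gB, Complex.ofReal_re]
    have e3 : ‖flat A₁ A₂ u v u v‖ ≤ Real.sqrt (sA A₁ A₂ u) * Real.sqrt (sA A₁ A₂ v) := by
      rw [flat_eq_hB]
      refine (norm_expC_mul_conj_le _ _ _).trans_eq ?_
      rw [sA_eq_hB, sA_eq_hB]
    calc (expR (A₁ ×ˢ A₁) fun x => ‖gB A₂ u v x‖ ^ 2) = (flat A₁ A₂ u v u v).re := e1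
      _ ≤ ‖flat A₁ A₂ u v u v‖ := by
          exact Complex.re_le_norm _
      _ ≤ _ := e3
  have h3 : ∀ u v : G → ℂ,
      Real.sqrt (expR (A₁ ×ˢ A₁) fun x => ‖gB A₂ u v x‖ ^ 2) ≤
        sA A₁ A₂ u ^ ((1 : ℝ) / 4) * sA A₁ A₂ v ^ ((1 : ℝ) / 4) := by
    intro u v
    refine (Real.sqrt_le_sqrt (h2 u v)).trans_eq ?_
    rw [Real.sqrt_mul (Real.sqrt_nonneg _), Real.sqrt_eq_rpow, Real.sqrt_eq_rpow,
      Real.sqrt_eq_rpow, Real.sqrt_eq_rpow,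
      ← Real.rpow_mul (sA_nonneg A₁ A₂ u), ← Real.rpow_mul (sA_nonneg A₁ A₂ v)]
    norm_num
  refine h1.trans ?_
  exact mul_le_mul (h3 u₁ v₁) (h3 u₂ v₂) (Real.sqrt_nonneg _)
    (mul_nonneg (Real.rpow_nonneg (sA_nonneg A₁ A₂ u₁) _)
      (Real.rpow_nonneg (sA_nonneg A₁ A₂ v₁) _))



/-! ### Expansion of the inner product for a sum, and atom facts -/

variable {p : ℕ}

lemma localU2Inner_eq_flat [NeZero p] {n ℓ : ℕ} (L : Fin ℓ → (Fin n → ZMod p))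
    (a₁ a₂ : Fin ℓ → ZMod p) (F : (Fin 2 → Bool) → (Fin n → ZMod p) → ℂ) :
    localU2Inner L a₁ a₂ F = flat (linAtom L a₁) (linAtom L a₂)
      (F ![false, false]) (F ![true, false]) (F ![false, true]) (F ![true, true]) :=
  u2_eq_flat _ _ F

lemma localU2Inner_add [NeZero p] {n ℓ : ℕ} (L : Fin ℓ → (Fin n → ZMod p))
    (a₁ a₂ : Fin ℓ → ZMod p) (f g : (Fin n → ZMod p) → ℂ) :
    (localU2Inner L a₁ a₂ fun _ => fun x => f x + g x) =
      ∑ t ∈ (Finset.univ : Finset (Fin 2 → Bool)).powerset,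
        localU2Inner L a₁ a₂ (fun ε => if ε ∈ t then f else g) := by
  classical
  have hpt : ∀ X : (Fin 2 → Bool) → (Fin n → ZMod p),
      (∏ ε : Fin 2 → Bool, cConj (wt ε) (f (X ε) + g (X ε))) =
        ∑ t ∈ (Finset.univ : Finset (Fin 2 → Bool)).powerset,
          ∏ ε : Fin 2 → Bool, cConj (wt ε) ((if ε ∈ t then f else g) (X ε)) := by
    intro X
    have h1 : (∏ ε : Fin 2 → Bool, cConj (wt ε) (f (X ε) + g (X ε))) =
        ∏ ε : Fin 2 → Bool, (cConj (wt ε) (f (X ε)) + cConj (wt ε) (g (X ε))) :=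
      Finset.prod_congr rfl fun ε _ => cConj_add _ _ _
    rw [h1, Finset.prod_add]
    refine Finset.sum_congr rfl fun t _ => ?_
    have h2 : ∀ ε : Fin 2 → Bool, cConj (wt ε) ((if ε ∈ t then f else g) (X ε)) =
        if ε ∈ t then cConj (wt ε) (f (X ε)) else cConj (wt ε) (g (X ε)) := fun ε => by
      split <;> rfl
    rw [Finset.prod_congr rfl fun ε _ => h2 ε, Finset.prod_ite,
      Finset.filter_mem_eq_inter, Finset.univ_inter, ← Finset.sdiff_eq_filter]
  unfold localU2Inner
  calc (expC (linAtom L a₁) fun x₀ => expC (linAtom L a₁) fun x₁ =>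
        expC (linAtom L a₂) fun y₀ => expC (linAtom L a₂) fun y₁ =>
        ∏ ε : Fin 2 → Bool, cConj (wt ε)
          ((fun x => f x + g x) (bsel (ε 0) x₀ x₁ + bsel (ε 1) y₀ y₁)))
      = expC (linAtom L a₁) fun x₀ => expC (linAtom L a₁) fun x₁ =>
          expC (linAtom L a₂) fun y₀ => expC (linAtom L a₂) fun y₁ =>
          ∑ t ∈ (Finset.univ : Finset (Fin 2 → Bool)).powerset,
            ∏ ε : Fin 2 → Bool, cConj (wt ε)
              ((if ε ∈ t then f else g) (bsel (ε 0) x₀ x₁ + bsel (ε 1) y₀ y₁)) :=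
        congrArg _ (funext fun x₀ => congrArg _ (funext fun x₁ => congrArg _ (funext fun y₀ =>
          congrArg _ (funext fun y₁ =>
            hpt fun ε => bsel (ε 0) x₀ x₁ + bsel (ε 1) y₀ y₁))))
    _ = expC (linAtom L a₁) fun x₀ => expC (linAtom L a₁) fun x₁ =>
          expC (linAtom L a₂) fun y₀ =>
          ∑ t ∈ (Finset.univ : Finset (Fin 2 → Bool)).powerset,
            expC (linAtom L a₂) fun y₁ =>
            ∏ ε : Fin 2 → Bool, cConj (wt ε)
              ((if ε ∈ t then f else g) (bsel (ε 0) x₀ x₁ + bsel (ε 1) y₀ y₁)) :=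
        congrArg _ (funext fun x₀ => congrArg _ (funext fun x₁ => congrArg _ (funext fun y₀ =>
          expC_sum _ _ _)))
    _ = expC (linAtom L a₁) fun x₀ => expC (linAtom L a₁) fun x₁ =>
          ∑ t ∈ (Finset.univ : Finset (Fin 2 → Bool)).powerset,
            expC (linAtom L a₂) fun y₀ => expC (linAtom L a₂) fun y₁ =>
            ∏ ε : Fin 2 → Bool, cConj (wt ε)
              ((if ε ∈ t then f else g) (bsel (ε 0) x₀ x₁ + bsel (ε 1) y₀ y₁)) :=
        congrArg _ (funext fun x₀ => congrArg _ (funext fun x₁ => expC_sum _ _ _))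
    _ = expC (linAtom L a₁) fun x₀ =>
          ∑ t ∈ (Finset.univ : Finset (Fin 2 → Bool)).powerset,
            expC (linAtom L a₁) fun x₁ =>
            expC (linAtom L a₂) fun y₀ => expC (linAtom L a₂) fun y₁ =>
            ∏ ε : Fin 2 → Bool, cConj (wt ε)
              ((if ε ∈ t then f else g) (bsel (ε 0) x₀ x₁ + bsel (ε 1) y₀ y₁)) :=
        congrArg _ (funext fun x₀ => expC_sum _ _ _)
    _ = ∑ t ∈ (Finset.univ : Finset (Fin 2 → Bool)).powerset,
          expC (linAtom L a₁) fun x₀ => expC (linAtom L a₁) fun x₁ =>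
          expC (linAtom L a₂) fun y₀ => expC (linAtom L a₂) fun y₁ =>
          ∏ ε : Fin 2 → Bool, cConj (wt ε)
            ((if ε ∈ t then f else g) (bsel (ε 0) x₀ x₁ + bsel (ε 1) y₀ y₁)) :=
        expC_sum _ _ _
    _ = _ := Finset.sum_congr rfl fun t _ => rfl

lemma exists_atom_mem {n ℓ : ℕ} [NeZero p] (hp : p.Prime)
    (L : Fin ℓ → (Fin n → ZMod p)) (hL : LinearIndependent (ZMod p) L)
    (a : Fin ℓ → ZMod p) : ∃ x, ∀ i, x ⬝ᵥ L i = a i := by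
  haveI : Fact p.Prime := ⟨hp⟩
  classical
  let M : Matrix (Fin ℓ) (Fin n) (ZMod p) := Matrix.of L
  have hinj : Function.Injective M.vecMulLinear := by
    have : Function.Injective M.vecMul := Matrix.vecMul_injective_iff.2 hL
    exact this
  have h1 : Mᵀ.rank = ℓ := by
    rw [Matrix.rank, Matrix.mulVecLin_transpose, LinearMap.finrank_range_of_inj hinj,
      Module.finrank_fin_fun]
  have h2 : M.rank = ℓ := by rw [← Matrix.rank_transpose]; exact h1
  have h3 : LinearMap.range M.mulVecLin = ⊤ := by
    apply Submodule.eq_top_of_finrank_eq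
    rw [show Module.finrank (ZMod p) ↥(LinearMap.range M.mulVecLin) = M.rank from rfl, h2,
      Module.finrank_fin_fun]
  obtain ⟨x, hx⟩ := (LinearMap.range_eq_top.1 h3) a
  refine ⟨x, fun i => ?_⟩
  have hx' : M *ᵥ x = a := hx
  have := congrFun hx' i
  rw [dotProduct_comm]
  simpa [Matrix.mulVec, dotProduct, M] using this


end SemiNormAux

/-- The local `U²` semi-norm is well-defined and is a semi-norm; it is a norm on the functions
supported on the atom `L(a₁ + a₂)`. -/
theorem statement7 (p : ℕ) [NeZero p] (hp : p.Prime) (n ℓ : ℕ)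
    (L : Fin ℓ → (Fin n → ZMod p)) (hL : LinearIndependent (ZMod p) L)
    (a₁ a₂ : Fin ℓ → ZMod p) :
    (∀ f : (Fin n → ZMod p) → ℂ,
        (localU2Inner L a₁ a₂ fun _ => f).im = 0 ∧
        0 ≤ (localU2Inner L a₁ a₂ fun _ => f).re) ∧
    (∀ f : (Fin n → ZMod p) → ℂ, 0 ≤ localU2Norm L a₁ a₂ f) ∧
    (∀ (c : ℂ) (f : (Fin n → ZMod p) → ℂ),
        localU2Norm L a₁ a₂ (fun x => c * f x) = ‖c‖ * localU2Norm L a₁ a₂ f) ∧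
    (∀ f g : (Fin n → ZMod p) → ℂ,
        localU2Norm L a₁ a₂ (fun x => f x + g x) ≤
          localU2Norm L a₁ a₂ f + localU2Norm L a₁ a₂ g) ∧
    (∀ f : (Fin n → ZMod p) → ℂ, (∀ x, x ∉ linAtom L (a₁ + a₂) → f x = 0) →
        localU2Norm L a₁ a₂ f = 0 → f = 0) := by
  classical
  have hconst : ∀ f : (Fin n → ZMod p) → ℂ,
      (localU2Inner L a₁ a₂ fun _ => f) = flat (linAtom L a₁) (linAtom L a₂) f f f f :=
    fun f => localU2Inner_eq_flat L a₁ a₂ fun _ => f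
  have hre : ∀ f : (Fin n → ZMod p) → ℂ,
      (localU2Inner L a₁ a₂ fun _ => f).re = sA (linAtom L a₁) (linAtom L a₂) f :=
    fun f => by rw [hconst f]; rfl
  have hnorm : ∀ f : (Fin n → ZMod p) → ℂ,
      localU2Norm L a₁ a₂ f = sA (linAtom L a₁) (linAtom L a₂) f ^ ((1 : ℝ) / 4) :=
    fun f => by rw [localU2Norm, hre]
  have hnormnn : ∀ f : (Fin n → ZMod p) → ℂ, 0 ≤ localU2Norm L a₁ a₂ f := fun f => by
    rw [hnorm]; exact Real.rpow_nonneg (sA_nonneg _ _ _) _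
  refine ⟨?_, hnormnn, ?_, ?_, ?_⟩
  · -- realness and nonnegativity of the inner product
    intro f
    constructor
    · rw [hconst f, flat_self_gB]; exact Complex.ofReal_im _
    · rw [hre f]; exact sA_nonneg _ _ f
  · -- homogeneity
    intro c f
    have hscale : (localU2Inner L a₁ a₂ fun _ => fun x => c * f x) =
        ((‖c‖ ^ 4 : ℝ) : ℂ) * (localU2Inner L a₁ a₂ fun _ => f) := by
      rw [hconst, hconst, flat, flat, ← expC_const_mul]
      refine congrArg _ (funext fun z => ?_)
      have hcc : c * (starRingEnd ℂ) c = ((‖c‖ ^ 2 : ℝ) : ℂ) := by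
        rw [Complex.mul_conj]
        norm_cast
        rw [Complex.normSq_eq_norm_sq]
      calc c * f (z.1.1 + z.2.1) * (starRingEnd ℂ) (c * f (z.1.2 + z.2.1)) *
            ((starRingEnd ℂ) (c * f (z.1.1 + z.2.2)) * (c * f (z.1.2 + z.2.2)))
          = (c * (starRingEnd ℂ) c) * (c * (starRingEnd ℂ) c) *
              (f (z.1.1 + z.2.1) * (starRingEnd ℂ) (f (z.1.2 + z.2.1)) *
                ((starRingEnd ℂ) (f (z.1.1 + z.2.2)) * f (z.1.2 + z.2.2))) := by
            simp only [map_mul]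
            ring
        _ = _ := by rw [hcc]; push_cast; ring
    rw [localU2Norm, localU2Norm, hscale, Complex.re_ofReal_mul,
      Real.mul_rpow (by positivity) (by rw [hre]; exact sA_nonneg _ _ f)]
    congr 1
    rw [← Real.rpow_natCast ‖c‖ 4, ← Real.rpow_mul (norm_nonneg c)]
    norm_num
  · -- triangle inequality
    intro f g
    set Nf := localU2Norm L a₁ a₂ f with hNf
    set Ng := localU2Norm L a₁ a₂ g with hNg
    have hterm : ∀ t ∈ (Finset.univ : Finset (Fin 2 → Bool)).powerset,
        (localU2Inner L a₁ a₂ fun ε => if ε ∈ t then f else g).re ≤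
          ∏ ε : Fin 2 → Bool, (if ε ∈ t then Nf else Ng) := by
      intro t _
      have hre_le : (localU2Inner L a₁ a₂ fun ε => if ε ∈ t then f else g).re ≤
          ‖localU2Inner L a₁ a₂ fun ε => if ε ∈ t then f else g‖ := by
        exact Complex.re_le_norm _
      refine hre_le.trans ?_
      rw [localU2Inner_eq_flat]
      refine (norm_flat_le _ _ _ _ _ _).trans_eq ?_
      rw [prod_fin2bool (fun ε => if ε ∈ t then Nf else Ng), hNf, hNg, hnorm f, hnorm g]
      split_ifs <;> ring
    have hsum : ∑ t ∈ (Finset.univ : Finset (Fin 2 → Bool)).powerset,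
        (∏ ε : Fin 2 → Bool, (if ε ∈ t then Nf else Ng)) = (Nf + Ng) ^ 4 := by
      have h1 : ∀ t : Finset (Fin 2 → Bool),
          (∏ ε : Fin 2 → Bool, (if ε ∈ t then Nf else Ng)) =
            (∏ _ε ∈ t, Nf) * ∏ _ε ∈ Finset.univ \ t, Ng := fun t => by
        rw [Finset.prod_ite, Finset.filter_mem_eq_inter, Finset.univ_inter,
          ← Finset.sdiff_eq_filter]
      rw [Finset.sum_congr rfl fun t _ => h1 t, ← Finset.prod_add]
      rw [Finset.prod_const]
      norm_num [show (Finset.univ : Finset (Fin 2 → Bool)).card = 4 from by decide]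
    have hle : (localU2Inner L a₁ a₂ fun _ => fun x => f x + g x).re ≤ (Nf + Ng) ^ 4 := by
      rw [localU2Inner_add, Complex.re_sum, ← hsum]
      exact Finset.sum_le_sum hterm
    have h0 : 0 ≤ (localU2Inner L a₁ a₂ fun _ => fun x => f x + g x).re := by
      rw [hre]; exact sA_nonneg _ _ _
    have h4 : 0 ≤ Nf + Ng := add_nonneg (hNf ▸ hnormnn f) (hNg ▸ hnormnn g)
    calc localU2Norm L a₁ a₂ (fun x => f x + g x)
        = (localU2Inner L a₁ a₂ fun _ => fun x => f x + g x).re ^ ((1 : ℝ) / 4) := rfl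
      _ ≤ ((Nf + Ng) ^ 4) ^ ((1 : ℝ) / 4) := Real.rpow_le_rpow h0 hle (by norm_num)
      _ = Nf + Ng := by
          rw [← Real.rpow_natCast (Nf + Ng) 4, ← Real.rpow_mul h4]
          norm_num
  · -- norm property on the atom
    intro f hsupp hz
    have h0 : sA (linAtom L a₁) (linAtom L a₂) f = 0 := by
      have h' : sA (linAtom L a₁) (linAtom L a₂) f ^ ((1 : ℝ) / 4) = 0 := by
        rw [← hnorm f]; exact hz
      rcases (Real.rpow_eq_zero_iff_of_nonneg (sA_nonneg _ _ _)).1 h' with ⟨h, _⟩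
      exact h
    obtain ⟨x₁, hx₁⟩ := exists_atom_mem hp L hL a₁
    obtain ⟨x₂, hx₂⟩ := exists_atom_mem hp L hL a₂
    have hx₁' : x₁ ∈ linAtom L a₁ := Finset.mem_filter.2 ⟨Finset.mem_univ _, hx₁⟩
    have hx₂' : x₂ ∈ linAtom L a₂ := Finset.mem_filter.2 ⟨Finset.mem_univ _, hx₂⟩
    have hall := expR_eq_zero ((linAtom L a₁) ×ˢ (linAtom L a₁))
      (fun x => ‖gB (linAtom L a₂) f f x‖ ^ 2) (fun x _ => sq_nonneg _)
      ⟨(x₁, x₁), Finset.mem_product.2 ⟨hx₁', hx₁'⟩⟩ (by rw [← sA_eq_gB]; exact h0)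
    have hg0 : gB (linAtom L a₂) f f (x₁, x₁) = 0 := by
      have h' := hall (x₁, x₁) (Finset.mem_product.2 ⟨hx₁', hx₁'⟩)
      exact norm_eq_zero.1 (pow_eq_zero_iff two_ne_zero |>.1 h')
    have hgr : gB (linAtom L a₂) f f (x₁, x₁) =
        ((expR (linAtom L a₂) fun y => ‖f (x₁ + y)‖ ^ 2 : ℝ) : ℂ) := by
      rw [gB, ← expC_ofReal]
      exact congrArg _ (funext fun y => by
        rw [Complex.mul_conj]
        norm_cast
        rw [Complex.normSq_eq_norm_sq])
    have hexpR0 : (expR (linAtom L a₂) fun y => ‖f (x₁ + y)‖ ^ 2) = 0 := by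
      have h' : ((expR (linAtom L a₂) fun y => ‖f (x₁ + y)‖ ^ 2 : ℝ) : ℂ) = 0 := by
        rw [← hgr]; exact hg0
      exact_mod_cast h'
    have hzero : ∀ y ∈ linAtom L a₂, f (x₁ + y) = 0 := fun y hy => by
      have h' := expR_eq_zero (linAtom L a₂) _ (fun _ _ => sq_nonneg _) ⟨x₂, hx₂'⟩ hexpR0 y hy
      exact norm_eq_zero.1 (pow_eq_zero_iff two_ne_zero |>.1 h')
    funext x
    show f x = 0
    by_cases hx : x ∈ linAtom L (a₁ + a₂)
    · have hmem : x - x₁ ∈ linAtom L a₂ := by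
        refine Finset.mem_filter.2 ⟨Finset.mem_univ _, fun i => ?_⟩
        have hxa : x ⬝ᵥ L i = a₁ i + a₂ i := by
          have h' := (Finset.mem_filter.1 hx).2 i
          simpa using h'
        rw [sub_dotProduct, hxa, hx₁ i]
        ring
      have h' := hzero (x - x₁) hmem
      rwa [add_sub_cancel] at h'
    · exact hsupp x hx



end TW
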